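/- (Generalized Law of Cosines) Let x ∈ 𝐇, and let y, z ∈ ℝ³ satisfy z ∗ z = −1, y ∗ y = 1 or y ∗ y = −1, with neither y nor z a scalar multiple of x. Then z ∗ y + (z ∗ x)(x ∗ y) = ‖z ⊗ x‖ · ‖x ⊗ y‖ · cos α, where α is the angle at x, i.e., cos α = t_x(z) ∗ t_x(y). -/

import Mathlib

noncomputable section

/-- The Lorentzian inner product `u ∗ v = u₁v₁ + u₂v₂ − u₃v₃` on ℝ³. -/
def lor (u v : Fin 3 → ℝ) : ℝ := u 0 * v 0 + u 1 * v 1 - u 2 * v 2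

/-- The hyperboloid model of the hyperbolic plane. -/
def Hyp : Set (Fin 3 → ℝ) := {u | lor u u = -1 ∧ 0 < u 2}

/-- The Lorentzian cross product `u ⊗ v = J (u × v)`, `J = diag(1,1,−1)`. -/
def lcross (u v : Fin 3 → ℝ) : Fin 3 → ℝ :=
  ![u 1 * v 2 - u 2 * v 1, u 2 * v 0 - u 0 * v 2, -(u 0 * v 1 - u 1 * v 0)]

/-- Lorentzian magnitude `‖w‖ = √(w ∗ w)` (for `w` with `w ∗ w ≥ 0`). -/
def lnorm (w : Fin 3 → ℝ) : ℝ := Real.sqrt (lor w w)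

/-- The unit tangent vector at `p` toward `y`:
`t_p(y) = (y + (p ∗ y)p)/√(y ∗ y + (p ∗ y)²)`. -/
def tang (p y : Fin 3 → ℝ) : Fin 3 → ℝ :=
  (Real.sqrt (lor y y + lor p y ^ 2))⁻¹ • (y + lor p y • p)

/-- Inverse hyperbolic cosine. -/
def arcosh (x : ℝ) : ℝ := Real.log (x + Real.sqrt (x ^ 2 - 1))

/-- Hyperbolic distance between points of the hyperboloid: `d(p,q) = arccosh(−p ∗ q)`. -/
def dHyp (p q : Fin 3 → ℝ) : ℝ := arcosh (-lor p q)

/-! Both sides share the numerator `z ∗ y + (z ∗ x)(x ∗ y)`: it is the Lorentzian product of the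
unnormalised tangents `z + (x ∗ z)x` and `y + (x ∗ y)x`, because `x ∗ x = −1`. The normalising
factors `√(v ∗ v + (x ∗ v)²)` of `t_x(z)` and `t_x(y)` are `‖x ⊗ z‖` and `‖x ⊗ y‖` by the Lorentzian
Lagrange identity, and they are nonzero since the Lorentz-orthogonal complement of the timelike
vector `x` is spacelike and contains `x ⊗ v ≠ 0`. -/

section Lorentz

variable (u v w x : Fin 3 → ℝ)

lemma lor_comm : lor u v = lor v u := by
  simp only [lor]; ring

lemma lor_smul_smul (a b : ℝ) : lor (a • u) (b • v) = a * b * lor u v := by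
  simp only [lor, Pi.smul_apply, smul_eq_mul]; ring

lemma lor_add_smul_add_smul (a b : ℝ) :
    lor (u + a • x) (v + b • x) = lor u v + b * lor u x + a * lor x v + a * b * lor x x := by
  simp only [lor, Pi.add_apply, Pi.smul_apply, smul_eq_mul]; ring

lemma lor_lcross_self : lor (lcross u v) (lcross u v) = lor u v ^ 2 - lor u u * lor v v := by
  simp only [lor, lcross, Matrix.cons_val_zero, Matrix.cons_val_one, Matrix.cons_val]; ring

lemma lor_lcross_left : lor u (lcross u v) = 0 := by
  simp only [lor, lcross, Matrix.cons_val_zero, Matrix.cons_val_one, Matrix.cons_val]; ring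

lemma lor_lcross_self_comm : lor (lcross u v) (lcross u v) = lor (lcross v u) (lcross v u) := by
  rw [lor_lcross_self, lor_lcross_self, lor_comm u v]; ring

variable {u v w x}

lemma exists_eq_smul_of_lcross_eq_zero (hx : x 2 ≠ 0) (h : lcross x v = 0) :
    ∃ t : ℝ, v = t • x := by
  have h0 := congrFun h 0
  have h1 := congrFun h 1
  simp only [lcross, Matrix.cons_val_zero, Matrix.cons_val_one, Pi.zero_apply] at h0 h1
  refine ⟨v 2 / x 2, ?_⟩
  funext i
  fin_cases i <;>
    simp only [Fin.zero_eta, Fin.mk_one, Fin.reduceFinMk, Pi.smul_apply, smul_eq_mul] <;>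
    field_simp <;> linarith

lemma apply_two_ne_zero_of_lor_self_neg (hx : lor x x < 0) : x 2 ≠ 0 := by
  intro h
  simp only [lor, h] at hx
  nlinarith [sq_nonneg (x 0), sq_nonneg (x 1)]

lemma lor_self_pos_of_lor_eq_zero (hx : lor x x < 0) (hw : w ≠ 0) (h : lor x w = 0) :
    0 < lor w w := by
  have hx2 := apply_two_ne_zero_of_lor_self_neg hx
  simp only [lor] at hx h ⊢
  have hw01 : 0 < w 0 ^ 2 + w 1 ^ 2 := by
    by_contra! hle
    have h0 : w 0 = 0 := by nlinarith [sq_nonneg (w 0), sq_nonneg (w 1)]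
    have h1 : w 1 = 0 := by nlinarith [sq_nonneg (w 0), sq_nonneg (w 1)]
    have h2 : w 2 = 0 := by
      rw [h0, h1] at h
      exact (mul_eq_zero.1 (by linarith : x 2 * w 2 = 0)).resolve_left hx2
    exact hw (funext fun i => by fin_cases i <;> simp [h0, h1, h2])
  -- Cauchy–Schwarz in the first two coordinates: `(x₂w₂)² = (x₀w₀ + x₁w₁)² ≤ (x₀² + x₁²)(w₀² + w₁²)`.
  have hsq : x 2 ^ 2 * w 2 ^ 2 = (x 0 * w 0 + x 1 * w 1) ^ 2 := by
    linear_combination (-(x 0 * w 0 + x 1 * w 1 + x 2 * w 2)) * h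
  nlinarith [sq_nonneg (x 0 * w 1 - x 1 * w 0), sq_pos_of_ne_zero hx2]

lemma lor_lcross_self_pos (hx : lor x x < 0) (hv : ¬ ∃ t : ℝ, v = t • x) :
    0 < lor (lcross x v) (lcross x v) :=
  lor_self_pos_of_lor_eq_zero hx
    (fun h => hv (exists_eq_smul_of_lcross_eq_zero (apply_two_ne_zero_of_lor_self_neg hx) h))
    (lor_lcross_left x v)

end Lorentz

section Hyperboloid

variable {x : Fin 3 → ℝ}

lemma tang_eq_inv_lnorm_smul (hx : lor x x = -1) (v : Fin 3 → ℝ) :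
    tang x v = (lnorm (lcross x v))⁻¹ • (v + lor x v • x) := by
  rw [tang, lnorm, lor_lcross_self, hx]
  ring_nf

lemma lor_add_smul_add_smul_of_lor_self (hx : lor x x = -1) (v w : Fin 3 → ℝ) :
    lor (v + lor x v • x) (w + lor x w • x) = lor v w + lor x v * lor x w := by
  rw [lor_add_smul_add_smul, hx, lor_comm v x]
  ring

lemma lor_tang_tang (hx : lor x x = -1) (v w : Fin 3 → ℝ) :
    lor (tang x v) (tang x w)
      = (lnorm (lcross x v))⁻¹ * (lnorm (lcross x w))⁻¹ * (lor v w + lor x v * lor x w) := by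
  rw [tang_eq_inv_lnorm_smul hx, tang_eq_inv_lnorm_smul hx, lor_smul_smul,
    lor_add_smul_add_smul_of_lor_self hx]

lemma lnorm_lcross_pos (hx : lor x x = -1) {v : Fin 3 → ℝ} (hv : ¬ ∃ t : ℝ, v = t • x) :
    0 < lnorm (lcross x v) :=
  Real.sqrt_pos.2 (lor_lcross_self_pos (by linarith) hv)

end Hyperboloid

theorem generalized_law_of_cosines_general
    (x y z : Fin 3 → ℝ) (hx : x ∈ Hyp)
    (hyx : ¬ ∃ t : ℝ, y = t • x) (hzx : ¬ ∃ t : ℝ, z = t • x) :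
    lor z y + lor z x * lor x y
      = lnorm (lcross z x) * lnorm (lcross x y) * lor (tang x z) (tang x y) := by
  have hxx : lor x x = -1 := hx.1
  have hz := lnorm_lcross_pos hxx hzx
  have hy := lnorm_lcross_pos hxx hyx
  rw [lnorm, ← lor_lcross_self_comm, ← lnorm, lor_tang_tang hxx, lor_comm z x]
  field_simp

/-- The Generalized Law of Cosines (Proposition 3.3):
`z ∗ y + (z ∗ x)(x ∗ y) = ‖z ⊗ x‖ ‖x ⊗ y‖ cos α`, where `cos α = t_x(z) ∗ t_x(y)`
is the cosine of the angle at `x`. -/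
theorem generalized_law_of_cosines
    (x y z : Fin 3 → ℝ) (hx : x ∈ Hyp)
    (hz : lor z z = -1) (hy : lor y y = 1 ∨ lor y y = -1)
    (hyx : ¬ ∃ t : ℝ, y = t • x) (hzx : ¬ ∃ t : ℝ, z = t • x) :
    lor z y + lor z x * lor x y
      = lnorm (lcross z x) * lnorm (lcross x y) * lor (tang x z) (tang x y) :=
  generalized_law_of_cosines_general x y z hx hyx hzx
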